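/- If copies u̇ and v̇ embedded in the same face f have neighborhoods on the boundary of f whose cyclic orders interleave (there exist u1, x1, u2, x2 in this cyclic order around f with u1,u2 ∈ N(u̇) and x1,x2 ∈ N(v̇)), then the edges from u̇ and v̇ to their neighbors cannot all be drawn inside f without a crossing. -/

import Mathlib

/-- `H` is a minor of `G`, expressed via branch sets. -/
def GraphMinor {W V : Type} (H : SimpleGraph W) (G : SimpleGraph V) : Prop :=
  ∃ φ : W → Set V,
    (∀ w, (φ w).Nonempty) ∧
    (∀ w, (G.induce (φ w)).Connected) ∧
    (∀ w w', w ≠ w' → Disjoint (φ w) (φ w')) ∧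
    (∀ w w', H.Adj w w' → ∃ a ∈ φ w, ∃ b ∈ φ w', G.Adj a b)

/-- Planarity via Wagner's characterization: no `K₅` minor and no `K₃,₃` minor. -/
def GraphPlanar {V : Type} (G : SimpleGraph V) : Prop :=
  ¬ GraphMinor (SimpleGraph.completeGraph (Fin 5)) G ∧
  ¬ GraphMinor (completeBipartiteGraph (Fin 3) (Fin 3)) G

/-- The boundary cycle of the face `f` (on `Fin n`, with cyclic successor
adjacency), two copies `u̇ = inr 0` and `v̇ = inr 1` joined to their
neighborhoods `U` resp. `X` on the boundary, and an apex `inr 2` joined to all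
boundary vertices.  Planarity of this graph is equivalent to the existence of
a crossing-free drawing of both stars inside the disk bounded by the face
boundary. -/
def twoStarGraph (n : ℕ) (U X : Set (Fin n)) : SimpleGraph (Fin n ⊕ Fin 3) :=
  SimpleGraph.fromRel fun a b =>
    match a, b with
    | Sum.inl i, Sum.inl j => j.1 = (i.1 + 1) % n
    | Sum.inl i, Sum.inr t => (t = 0 ∧ i ∈ U) ∨ (t = 1 ∧ i ∈ X) ∨ t = 2
    | _, _ => False

/-!
Cut the boundary cycle into the arcs `[0, b)`, `[b, c)`, `[c, d)`, `[d, n)`, add `u̇` to the first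
(it sees `a` there) and `v̇` to the second (it sees `b`), and take the apex on its own. These five
sets are the branch sets of a `K₅` minor: consecutive arcs are joined by boundary edges (the last
and the first by the edge `n - 1 ~ 0`), `u̇` reaches the third arc through `c`, `v̇` reaches the
fourth through `d`, and the apex sees every arc.
-/

open Function SimpleGraph Order

theorem graphMinor_completeGraph_of_branchSets {W V : Type} [LinearOrder W] (G : SimpleGraph V)
    (φ : W → Set V) (hconn : ∀ w, (G.induce (φ w)).Connected)
    (hdisj : Pairwise (Disjoint on φ))
    (hadj : ∀ w w', w < w' → ∃ x ∈ φ w, ∃ y ∈ φ w', G.Adj x y) :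
    GraphMinor (completeGraph W) G := by
  refine ⟨φ, fun w => Set.nonempty_coe_sort.mp (hconn w).nonempty, hconn, hdisj,
    fun w w' hne => ?_⟩
  rcases lt_or_gt_of_ne hne with h | h
  · exact hadj w w' h
  · obtain ⟨x, hx, y, hy, hxy⟩ := hadj w' w h
    exact ⟨y, hy, x, hx, hxy.symm⟩

namespace SimpleGraph

variable {V : Type*} (G : SimpleGraph V)

theorem preconnected_induce_image_of_ordConnected {α : Type*} [LinearOrder α] [SuccOrder α]
    [IsSuccArchimedean α] (f : α → V) (hf : ∀ i j, i ⋖ j → G.Adj (f i) (f j))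
    (s : Set α) [s.OrdConnected] : (G.induce (f '' s)).Preconnected := by
  have reach : ∀ i (hi : i ∈ s) j (hj : j ∈ s), i ≤ j → (G.induce (f '' s)).Reachable
      ⟨f i, s.mem_image_of_mem f hi⟩ ⟨f j, s.mem_image_of_mem f hj⟩ := by
    intro i hi j hj hij
    revert hj
    refine Succ.rec (P := fun k _ => ∀ hk : k ∈ s, (G.induce (f '' s)).Reachable
      ⟨f i, s.mem_image_of_mem f hi⟩ ⟨f k, s.mem_image_of_mem f hk⟩) (fun _ => .rfl) ?_ hij
    intro k hik ih hk'
    by_cases hk : IsMax k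
    · simpa only [hk.succ_eq] using ih (hk.succ_eq ▸ hk')
    have hks : k ∈ s := Set.Icc_subset s hi hk' ⟨hik, le_succ k⟩
    exact (ih hks).trans (Adj.reachable (hf k _ (covBy_succ_of_not_isMax hk)))
  rintro ⟨_, i, hi, rfl⟩ ⟨_, j, hj, rfl⟩
  rcases le_total i j with h | h
  exacts [reach i hi j hj h, (reach j hj i hi h).symm]

theorem connected_induce_insert_of_adj {s : Set V} {v w : V} (hs : (G.induce s).Preconnected)
    (hw : w ∈ s) (hvw : G.Adj v w) : (G.induce (insert v s)).Connected := by
  rw [Set.insert_eq]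
  exact connected_induce_union Preconnected.of_subsingleton hs rfl hw hvw

end SimpleGraph

section TwoStarGraph

variable {n : ℕ} {U X : Set (Fin n)}

theorem twoStarGraph_adj_inl_inl {i j : Fin n} (hne : i ≠ j) (h : j.1 = (i.1 + 1) % n) :
    (twoStarGraph n U X).Adj (.inl i) (.inl j) := by
  rw [twoStarGraph, fromRel_adj]
  exact ⟨by simpa using hne, Or.inl h⟩

theorem twoStarGraph_adj_of_covBy {i j : Fin n} (h : i ⋖ j) :
    (twoStarGraph n U X).Adj (.inl i) (.inl j) := by
  rw [Fin.covBy_iff, Nat.covBy_iff_add_one_eq] at h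
  exact twoStarGraph_adj_inl_inl (by omega) (by rw [Nat.mod_eq_of_lt (by omega)]; omega)

@[simp]
theorem twoStarGraph_adj_inl_inr {i : Fin n} {t : Fin 3} :
    (twoStarGraph n U X).Adj (.inl i) (.inr t) ↔
      (t = 0 ∧ i ∈ U) ∨ (t = 1 ∧ i ∈ X) ∨ t = 2 := by
  simp [twoStarGraph]

theorem twoStarGraph_adj_pred {i : Fin n} (hi : ¬IsMin i) :
    (twoStarGraph n U X).Adj (.inl (pred i)) (.inl i) :=
  twoStarGraph_adj_of_covBy (pred_covBy_of_not_isMin hi)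

theorem preconnected_twoStarGraph_induce_inl_image (s : Set (Fin n)) [s.OrdConnected] :
    ((twoStarGraph n U X).induce (.inl '' s)).Preconnected :=
  preconnected_induce_image_of_ordConnected _ _ (fun _ _ => twoStarGraph_adj_of_covBy) s

theorem twoStarGraph_adj_last_zero (hn : 2 ≤ n) :
    (twoStarGraph n U X).Adj (.inl ⟨n - 1, by omega⟩) (.inl ⟨0, by omega⟩) :=
  twoStarGraph_adj_inl_inl (by simp [Fin.ext_iff]; omega)
    (by simp [Nat.sub_add_cancel (by omega : 1 ≤ n)])

def k5BranchSets (b c d : Fin n) : Fin 5 → Set (Fin n ⊕ Fin 3) :=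
  ![insert (.inr 0) (.inl '' Set.Iio b), insert (.inr 1) (.inl '' Set.Ico b c),
    .inl '' Set.Ico c d, .inl '' Set.Ici d, {.inr 2}]

theorem pairwise_disjoint_k5BranchSets {b c d : Fin n} (hbc : b ≤ c) (hcd : c ≤ d) :
    Pairwise (Disjoint on k5BranchSets b c d) := by
  intro i j hij
  fin_cases i <;> fin_cases j <;> simp_all [k5BranchSets, onFun, Set.disjoint_left] <;>
    intros <;> order

theorem connected_induce_k5BranchSets {a b c d : Fin n} (hab : a < b) (hbc : b < c) (hcd : c < d)
    (ha : a ∈ U) (hb : b ∈ X) (w : Fin 5) :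
    ((twoStarGraph n U X).induce (k5BranchSets b c d w)).Connected := by
  fin_cases w
  · exact connected_induce_insert_of_adj _ (preconnected_twoStarGraph_induce_inl_image _)
      (Set.mem_image_of_mem _ hab) (twoStarGraph_adj_inl_inr.2 (.inl ⟨rfl, ha⟩)).symm
  · exact connected_induce_insert_of_adj _ (preconnected_twoStarGraph_induce_inl_image _)
      (Set.mem_image_of_mem _ ⟨le_rfl, hbc⟩)
      (twoStarGraph_adj_inl_inr.2 (.inr (.inl ⟨rfl, hb⟩))).symm
  · exact (connected_iff _).2 ⟨preconnected_twoStarGraph_induce_inl_image _,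
      ⟨⟨_, Set.mem_image_of_mem _ ⟨le_rfl, hcd⟩⟩⟩⟩
  · exact (connected_iff _).2 ⟨preconnected_twoStarGraph_induce_inl_image _,
      ⟨⟨_, Set.mem_image_of_mem _ Set.self_mem_Ici⟩⟩⟩
  · show ((twoStarGraph n U X).induce {.inr 2}).Connected
    exact (connected_iff _).2 ⟨Preconnected.of_subsingleton, ⟨⟨_, rfl⟩⟩⟩

theorem exists_adj_k5BranchSets {a b c d : Fin n} (hab : a < b) (hbc : b < c) (hcd : c < d)
    (hc : c ∈ U) (hd : d ∈ X) (w w' : Fin 5) (hww' : w < w') :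
    ∃ x ∈ k5BranchSets b c d w, ∃ y ∈ k5BranchSets b c d w',
      (twoStarGraph n U X).Adj x y := by
  have hn : 2 ≤ n := by omega
  fin_cases w <;> fin_cases w' <;> try exact absurd hww' (by decide)
  · exact ⟨.inl (pred b), by simp [k5BranchSets, pred_lt_of_not_isMin (not_isMin_of_lt hab)],
      .inl b, by simp [k5BranchSets, hbc], twoStarGraph_adj_pred (not_isMin_of_lt hab)⟩
  · exact ⟨.inr 0, by simp [k5BranchSets], .inl c, by simp [k5BranchSets, hcd],
      (twoStarGraph_adj_inl_inr.2 (.inl ⟨rfl, hc⟩)).symm⟩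
  · refine ⟨.inl ⟨0, by omega⟩, ?_, .inl ⟨n - 1, by omega⟩, ?_,
      (twoStarGraph_adj_last_zero hn).symm⟩
    · exact .inr ⟨_, (Nat.zero_le a.1).trans_lt hab, rfl⟩
    · exact ⟨_, (show d.1 ≤ n - 1 by omega), rfl⟩
  · exact ⟨.inl a, by simp [k5BranchSets, hab], .inr 2, by simp [k5BranchSets], by simp⟩
  · exact ⟨.inl (pred c),
      by simp [k5BranchSets, le_pred_of_lt hbc, pred_lt_of_not_isMin (not_isMin_of_lt hbc)],
      .inl c, by simp [k5BranchSets, hcd], twoStarGraph_adj_pred (not_isMin_of_lt hbc)⟩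
  · exact ⟨.inr 1, by simp [k5BranchSets], .inl d, by simp [k5BranchSets],
      (twoStarGraph_adj_inl_inr.2 (.inr (.inl ⟨rfl, hd⟩))).symm⟩
  · exact ⟨.inl b, by simp [k5BranchSets, hbc], .inr 2, by simp [k5BranchSets], by simp⟩
  · exact ⟨.inl (pred d),
      by simp [k5BranchSets, le_pred_of_lt hcd, pred_lt_of_not_isMin (not_isMin_of_lt hcd)],
      .inl d, by simp [k5BranchSets], twoStarGraph_adj_pred (not_isMin_of_lt hcd)⟩
  · exact ⟨.inl c, by simp [k5BranchSets, hcd], .inr 2, by simp [k5BranchSets], by simp⟩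
  · exact ⟨.inl d, by simp [k5BranchSets], .inr 2, by simp [k5BranchSets], by simp⟩

end TwoStarGraph

/-- If the neighborhoods of the two copies `u̇` and `v̇` placed inside the face
`f` interleave in the cyclic order of the boundary of `f` (there are boundary
vertices `a < b < c < d` with `a, c ∈ N(u̇)` and `b, d ∈ N(v̇)`), then the
edges from `u̇` and `v̇` to their neighbors cannot all be drawn inside `f`
without a crossing. -/
theorem stmt17 (n : ℕ) (U X : Set (Fin n)) (a b c d : Fin n)
    (hab : a < b) (hbc : b < c) (hcd : c < d)
    (ha : a ∈ U) (hc : c ∈ U) (hb : b ∈ X) (hd : d ∈ X) :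
    ¬ GraphPlanar (twoStarGraph n U X) := fun hplanar =>
  hplanar.1 <| graphMinor_completeGraph_of_branchSets _ (k5BranchSets b c d)
    (connected_induce_k5BranchSets hab hbc hcd ha hb)
    (pairwise_disjoint_k5BranchSets hbc.le hcd.le)
    (exists_adj_k5BranchSets hab hbc hcd hc hd)
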